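/- arXiv:2103.07840 — 3 statements merged into one kernel-verified Lean document; each statement's English description precedes it below -/
import Mathlib

section
/- Let $SP_s(x)$ be a generalized star with center $x$ of degree $s \ge 3$, and let $w$ be a vertex such that every vertex is within distance $i$ of $w$. If $|SP_s(x)| = si$, then either $w = x$ and $SP_s(x)-x = (s-1)P_i + P_{i-1}$ (disjoint union of $s-1$ paths of order $i$ and one of order $i-1$), or $d(x,w)=1$, $s=3$, and $SP_s(x)-\{x,w\} = P_i + 2P_{i-1}$. -/
open SimpleGraph

/-- A burning sequence of length `k` (0-indexed: `x 0, …, x (k-1)`):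
the distance conditions and the covering condition. -/
def IsBurnSeq {V : Type*} (G : SimpleGraph V) (k : ℕ) (x : ℕ → V) : Prop :=
  (∀ i j : ℕ, i < j → j < k → (↑(j - i) : ℕ∞) ≤ G.edist (x i) (x j)) ∧
  (∀ v : V, ∃ i < k, G.edist (x i) v ≤ (↑(k - 1 - i) : ℕ∞))

/-- The burning number of a graph: the least length of a burning sequence. -/
noncomputable def burningNumber {V : Type*} (G : SimpleGraph V) : ℕ :=
  sInf {k | ∃ x : ℕ → V, IsBurnSeq G k x}

/-- `G` is a path graph of order `m`: a tree with all degrees at most `2`. -/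
def IsPathGraph {V : Type*} (G : SimpleGraph V) (m : ℕ) : Prop :=
  G.IsTree ∧ Nat.card V = m ∧ ∀ v : V, (G.neighborSet v).ncard ≤ 2

/-!
Deleting a connected vertex set `S` from a tree leaves one component for each vertex `u`
adjacent to `S`, and for maximum degree `2` that component is a path with end `u`. If `u`
hangs from `r ∈ S`, a vertex at distance `j` from `u` in the path is at distance
`d(w, r) + 1 + j` from any `w ∈ S`, so the component has at most `i - d(w, r)` vertices.

For `w = x` the `s` branches at `x` have at most `i` vertices each and `s·i - 1` in total, so
one has order `i - 1` and the others order `i`. For `w ≠ x`, with `d = d(x, w)`, the branch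
containing `w` has at most `d + i` vertices and the other `s - 1` branches at most `i - d`, so
`s·i - 1 ≤ s·i - (s - 2)·d`, whence `d = 1` and `s = 3`. Then `G - {x, w}` consists of the two
branches at `x`, of order at most `i - 1`, and at most one component hanging from `w`, of order
at most `i`; counting its `3i - 2` vertices forces equality everywhere.
-/

section Counting

variable {ι : Type*} [DecidableEq ι]

lemma Fintype.sum_update_const [Fintype ι] (i₀ : ι) (a b : ℕ) :
    ∑ i, Function.update (fun _ => b) i₀ a i = a + (Fintype.card ι - 1) * b := by
  rw [Finset.sum_update_of_mem (Finset.mem_univ _), Finset.sum_const, smul_eq_mul,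
    Finset.card_sdiff_of_subset (by simp), Finset.card_singleton, Finset.card_univ]

lemma le_update_const {f : ι → ℕ} {a b : ℕ} {i₀ : ι} (h₀ : f i₀ ≤ a) (h : ∀ i ≠ i₀, f i ≤ b)
    (i : ι) : f i ≤ Function.update (fun _ => b) i₀ a i := by
  rcases eq_or_ne i i₀ with rfl | hi
  · simpa using h₀
  · simpa [hi] using h i hi

end Counting

namespace SimpleGraph

section Induce

variable {V : Type*} {G : SimpleGraph V}

lemma IsAcyclic.length_eq_dist (hG : G.IsAcyclic) {u v : V} {p : G.Walk u v} (hp : p.IsPath) :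
    p.length = G.dist u v := by
  obtain ⟨q, hq, hql⟩ := p.reachable.exists_path_of_dist
  have hpq : p = q := congrArg Subtype.val ((hG.subsingleton_path u v).elim ⟨p, hp⟩ ⟨q, hq⟩)
  rw [hpq, hql]

lemma ncard_neighborSet_induce (s : Set V) (v : s) :
    ((G.induce s).neighborSet v).ncard = (G.neighborSet v ∩ s).ncard := by
  rw [← Set.ncard_image_of_injective _ Subtype.val_injective]
  congr 1
  ext y
  simp only [Set.mem_image, mem_neighborSet, comap_adj, Function.Embedding.coe_subtype,
    Set.mem_inter_iff]
  exact ⟨fun ⟨z, hz, hzy⟩ => hzy ▸ ⟨hz, z.2⟩, fun ⟨hy, hys⟩ => ⟨⟨y, hys⟩, hy, rfl⟩⟩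

lemma ncard_neighborSet_induce_le [Finite V] (s : Set V) (v : s) :
    ((G.induce s).neighborSet v).ncard ≤ (G.neighborSet v).ncard :=
  ncard_neighborSet_induce s v ▸ Set.ncard_inter_le_ncard_left _ _

lemma ncard_neighborSet_induce_lt [Finite V] {s : Set V} (v : s) {r : V} (hr : r ∉ s)
    (hvr : G.Adj v r) : ((G.induce s).neighborSet v).ncard < (G.neighborSet v).ncard :=
  ncard_neighborSet_induce s v ▸ Set.ncard_lt_ncard
    (Set.inter_subset_left.ssubset_of_not_subset fun h => hr (h hvr).2)

lemma Reachable.exists_isPath_of_induce {s : Set V} {a b : s} (h : (G.induce s).Reachable a b) :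
    ∃ p : G.Walk a b, p.IsPath ∧ p.length = (G.induce s).dist a b ∧ ∀ y ∈ p.support, y ∈ s := by
  obtain ⟨p, hp, hpl⟩ := h.exists_path_of_dist
  refine ⟨p.map (Embedding.induce s).toHom, hp.map Subtype.val_injective,
    (Walk.length_map _ _).trans hpl, fun y hy => ?_⟩
  obtain ⟨z, -, rfl⟩ := List.mem_map.mp (Walk.support_map _ p ▸ hy)
  exact z.2

lemma exists_adj_reachable_induce_compl {S : Set V} {a v : V} (p : G.Walk v a) (ha : a ∈ S)
    (hv : v ∉ S) : ∃ r ∈ S, ∃ u, ∃ hu : u ∉ S, G.Adj r u ∧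
      (G.induce Sᶜ).Reachable ⟨u, hu⟩ ⟨v, hv⟩ := by
  induction p with
  | nil => exact absurd ha hv
  | @cons v c a hvc p ih =>
    by_cases hc : c ∈ S
    · exact ⟨c, hc, v, hv, hvc.symm, Reachable.rfl⟩
    · obtain ⟨r, hr, u, hu, hru, hreach⟩ := ih ha hc
      exact ⟨r, hr, u, hu, hru, hreach.trans (induce_adj.mpr hvc.symm).reachable⟩

/-- In a forest, a path inside `S`, an edge leaving `S` and a geodesic of `G - S`
concatenate to a path of `G`, hence to a geodesic. -/
lemma IsAcyclic.dist_eq_length_add_dist_induce_compl (hG : G.IsAcyclic) {S : Set V}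
    {a r u v : V} {q : G.Walk a r} (hq : q.IsPath) (hqS : ∀ y ∈ q.support, y ∈ S)
    (hru : G.Adj r u) (hu : u ∉ S) (hv : v ∉ S)
    (huv : (G.induce Sᶜ).Reachable ⟨u, hu⟩ ⟨v, hv⟩) :
    G.dist a v = q.length + 1 + (G.induce Sᶜ).dist ⟨u, hu⟩ ⟨v, hv⟩ := by
  obtain ⟨p, hp, hpl, hpS⟩ := huv.exists_isPath_of_induce
  have hpath : (q.append (p.cons hru)).IsPath := by
    rw [Walk.isPath_def, Walk.support_append, Walk.support_cons, List.tail_cons,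
      List.nodup_append]
    exact ⟨hq.support_nodup, hp.support_nodup,
      fun y hy z hz hyz => hpS z hz (hyz ▸ hqS y hy)⟩
  rw [← hG.length_eq_dist hpath, Walk.length_append, Walk.length_cons, hpl]
  ring

lemma IsAcyclic.eq_of_reachable_induce_compl (hG : G.IsAcyclic) {S : Set V} {a b u u' : V}
    {q : G.Walk a b} (hq : q.IsPath) (hqS : ∀ y ∈ q.support, y ∈ S)
    (hau : G.Adj a u) (hbu' : G.Adj b u') (hu : u ∉ S) (hu' : u' ∉ S)
    (huu' : (G.induce Sᶜ).Reachable ⟨u', hu'⟩ ⟨u, hu⟩) : u' = u := by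
  -- `d(a, u) = 1` leaves no room for the path `q`, `b u'`, `u' ⋯ u`.
  have h := hG.dist_eq_length_add_dist_induce_compl hq hqS hbu' hu' hu huu'
  rw [dist_eq_one_iff_adj.mpr hau] at h
  simpa using huu'.dist_eq_zero_iff.mp (by omega)

lemma Connected.dist_eq_dist_add_dist_of_not_reachable_induce (hG : G.Connected) {x a v : V}
    (ha : a ≠ x) (hv : v ≠ x) (h : ¬(G.induce {x}ᶜ).Reachable ⟨a, ha⟩ ⟨v, hv⟩) :
    G.dist a v = G.dist a x + G.dist x v := by
  classical
  obtain ⟨p, -, hp⟩ := hG.exists_path_of_dist a v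
  have hx : x ∈ p.support := by
    by_contra hx
    exact h ⟨p.induce {x}ᶜ fun y hy hyx => hx (hyx ▸ hy)⟩
  have hsplit := congrArg Walk.length (p.take_spec hx)
  rw [Walk.length_append, hp] at hsplit
  have := G.dist_le (p.takeUntil x hx)
  have := G.dist_le (p.dropUntil x hx)
  have := hG.dist_triangle (u := a) (v := x) (w := v)
  omega

end Induce

section PathComponents

variable {W : Type*} {H : SimpleGraph W}

lemma Reachable.exists_adj_dist_eq {u v : W} {d : ℕ} (hr : H.Reachable u v)
    (h : H.dist u v = d + 1) : ∃ z, H.Adj z v ∧ H.dist u z = d := by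
  obtain ⟨p, hp⟩ := hr.symm.exists_walk_length_eq_dist
  rw [dist_comm] at h
  cases p with
  | nil => simp at h
  | @cons _ z _ hadj q =>
    refine ⟨z, hadj.symm, le_antisymm ?_ ?_⟩
    · have := H.dist_le q.reverse
      simp only [Walk.length_cons, Walk.length_reverse] at hp this
      omega
    · have := hadj.symm.reachable.dist_triangle_right u
      rw [dist_comm, h, dist_eq_one_iff_adj.mpr hadj.symm] at this
      omega

variable [Finite W]

lemma injOn_dist_of_ncard_neighborSet_le
    (hdeg : ∀ v, (H.neighborSet v).ncard ≤ 2) {u : W} (hu : (H.neighborSet u).ncard ≤ 1) :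
    Set.InjOn (H.dist u) {v | H.Reachable u v} := by
  suffices ∀ d v₁ v₂, H.Reachable u v₁ → H.Reachable u v₂ →
      H.dist u v₁ = d → H.dist u v₂ = d → v₁ = v₂ from
    fun v₁ h₁ v₂ h₂ h => this _ v₁ v₂ h₁ h₂ rfl h.symm
  intro d
  induction d with
  | zero =>
    intro v₁ v₂ h₁ h₂ hd₁ hd₂
    rw [← h₁.dist_eq_zero_iff.mp hd₁, ← h₂.dist_eq_zero_iff.mp hd₂]
  | succ d ih =>
    intro v₁ v₂ h₁ h₂ hd₁ hd₂
    by_contra hne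
    obtain ⟨z, hz₁, hzd⟩ := h₁.exists_adj_dist_eq hd₁
    obtain ⟨z', hz₂, hz'd⟩ := h₂.exists_adj_dist_eq hd₂
    have hrz : H.Reachable u z := h₁.trans hz₁.symm.reachable
    obtain rfl : z = z' := ih z z' hrz (h₂.trans hz₂.symm.reachable) hzd hz'd
    cases d with
    | zero =>
      obtain rfl : u = z := hrz.dist_eq_zero_iff.mp hzd
      have : 1 < (H.neighborSet u).ncard := (Set.one_lt_ncard_iff).mpr ⟨v₁, v₂, hz₁, hz₂, hne⟩
      omega
    | succ e =>
      obtain ⟨y, hy, hyd⟩ := hrz.exists_adj_dist_eq hzd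
      have : 2 < (H.neighborSet z).ncard := (Set.two_lt_ncard_iff).mpr
        ⟨y, v₁, v₂, hy.symm, hz₁, hz₂, fun h => by rw [h] at hyd; omega,
          fun h => by rw [h] at hyd; omega, hne⟩
      have := hdeg z
      omega

lemma ncard_supp_le_of_forall_dist_lt
    (hdeg : ∀ v, (H.neighborSet v).ncard ≤ 2) {u : W} (hu : (H.neighborSet u).ncard ≤ 1)
    {m : ℕ} (hm : ∀ v, H.Reachable u v → H.dist u v < m) :
    (H.connectedComponentMk u).supp.ncard ≤ m := by
  have hsupp : (H.connectedComponentMk u).supp = {v | H.Reachable u v} := by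
    ext v
    simp [ConnectedComponent.eq, reachable_comm]
  rw [hsupp]
  calc {v | H.Reachable u v}.ncard ≤ (Set.Iio m).ncard :=
        Set.ncard_le_ncard_of_injOn _ hm (injOn_dist_of_ncard_neighborSet_le hdeg hu)
    _ = m := by simp

lemma card_eq_sum_ncard_supp [Fintype H.ConnectedComponent] :
    Nat.card W = ∑ c : H.ConnectedComponent, c.supp.ncard := by
  calc Nat.card W = Nat.card (Σ c : H.ConnectedComponent, c.supp) :=
        (Nat.card_congr (Equiv.sigmaFiberEquiv H.connectedComponentMk)).symm
    _ = ∑ c : H.ConnectedComponent, c.supp.ncard := by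
        simp only [Nat.card_sigma, Nat.card_coe_set_eq]

lemma exists_ncard_supp_lt_of_card_lt {m : ℕ} (h : Nat.card W < Nat.card H.ConnectedComponent * m) :
    ∃ c : H.ConnectedComponent, c.supp.ncard < m := by
  have := Fintype.ofFinite H.ConnectedComponent
  by_contra! hge
  have := Finset.card_nsmul_le_sum Finset.univ _ m fun c _ => hge c
  rw [← card_eq_sum_ncard_supp, smul_eq_mul, Finset.card_univ, ← Nat.card_eq_fintype_card] at this
  omega

lemma card_le_of_ncard_supp_le (c₀ : H.ConnectedComponent) {a b : ℕ} (h₀ : c₀.supp.ncard ≤ a)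
    (h : ∀ c ≠ c₀, c.supp.ncard ≤ b) :
    Nat.card W ≤ a + (Nat.card H.ConnectedComponent - 1) * b := by
  classical
  have := Fintype.ofFinite H.ConnectedComponent
  rw [card_eq_sum_ncard_supp (H := H), Nat.card_eq_fintype_card, ← Fintype.sum_update_const c₀]
  exact Finset.sum_le_sum fun c _ =>
    le_update_const (f := fun c : H.ConnectedComponent => c.supp.ncard) h₀ h c

lemma isPathGraph_induce_supp (hH : H.IsAcyclic) (hdeg : ∀ v, (H.neighborSet v).ncard ≤ 2)
    (c : H.ConnectedComponent) : IsPathGraph (H.induce c.supp) c.supp.ncard :=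
  ⟨hH.isTree_connectedComponent c, Nat.card_coe_set_eq _,
    fun v => (ncard_neighborSet_induce_le _ v).trans (hdeg v)⟩

lemma isPathGraph_of_ncard_supp_le (hH : H.IsAcyclic) (hdeg : ∀ v, (H.neighborSet v).ncard ≤ 2)
    (c₀ : H.ConnectedComponent) {a b : ℕ} (h₀ : c₀.supp.ncard ≤ a)
    (h : ∀ c ≠ c₀, c.supp.ncard ≤ b)
    (hW : a + (Nat.card H.ConnectedComponent - 1) * b ≤ Nat.card W) :
    IsPathGraph (H.induce c₀.supp) a ∧ ∀ c ≠ c₀, IsPathGraph (H.induce c.supp) b := by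
  classical
  have := Fintype.ofFinite H.ConnectedComponent
  rw [card_eq_sum_ncard_supp (H := H), Nat.card_eq_fintype_card,
    ← Fintype.sum_update_const c₀] at hW
  have hle := fun c : H.ConnectedComponent =>
    le_update_const (f := fun c : H.ConnectedComponent => c.supp.ncard) h₀ h c
  have heq := (Finset.sum_eq_sum_iff_of_le fun c _ => hle c).mp
    (le_antisymm (Finset.sum_le_sum fun c _ => hle c) hW)
  refine ⟨?_, fun c hc => ?_⟩
  · simpa [heq c₀ (Finset.mem_univ _)] using isPathGraph_induce_supp hH hdeg c₀
  · simpa [heq c (Finset.mem_univ _), hc] using isPathGraph_induce_supp hH hdeg c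

end PathComponents

section DeleteSubtree

variable {V : Type*} {G : SimpleGraph V} {S : Set V}

lemma Connected.exists_adj_eq_connectedComponentMk (hG : G.Connected) (hS : S.Nonempty)
    (c : (G.induce Sᶜ).ConnectedComponent) :
    ∃ r ∈ S, ∃ u, ∃ hu : u ∉ S, G.Adj r u ∧ c = (G.induce Sᶜ).connectedComponentMk ⟨u, hu⟩ := by
  induction c using ConnectedComponent.ind with
  | h v =>
    obtain ⟨a, ha⟩ := hS
    obtain ⟨r, hr, u, hu, hru, huv⟩ := exists_adj_reachable_induce_compl (hG v a).some ha v.2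
    exact ⟨r, hr, u, hu, hru, ConnectedComponent.sound huv.symm⟩

lemma IsTree.card_connectedComponent_induce_compl (hG : G.IsTree) (hS : (G.induce S).Connected) :
    Nat.card (G.induce Sᶜ).ConnectedComponent = {u | u ∉ S ∧ ∃ r ∈ S, G.Adj r u}.ncard := by
  rw [← Nat.card_coe_set_eq]
  refine (Nat.card_eq_of_bijective
    (fun u : {u | u ∉ S ∧ ∃ r ∈ S, G.Adj r u} => (G.induce Sᶜ).connectedComponentMk ⟨u, u.2.1⟩)
    ⟨?_, fun c => ?_⟩).symm
  · rintro ⟨u₁, hu₁, r₁, hr₁, hru₁⟩ ⟨u₂, hu₂, r₂, hr₂, hru₂⟩ h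
    obtain ⟨q, hq, -, hqS⟩ := (hS.preconnected ⟨r₁, hr₁⟩ ⟨r₂, hr₂⟩).exists_isPath_of_induce
    exact Subtype.ext (hG.isAcyclic.eq_of_reachable_induce_compl hq hqS hru₁ hru₂ hu₁ hu₂
      (ConnectedComponent.exact h).symm).symm
  · obtain ⟨r, hr, u, hu, hru, rfl⟩ :=
      hG.connected.exists_adj_eq_connectedComponentMk ⟨_, hS.nonempty.some.2⟩ c
    exact ⟨⟨u, hu, r, hr, hru⟩, rfl⟩

lemma IsAcyclic.ncard_supp_add_length_le [Finite V] (hG : G.IsAcyclic)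
    (hdeg : ∀ v ∉ S, (G.neighborSet v).ncard ≤ 2) {a r u : V} {q : G.Walk a r} (hq : q.IsPath)
    (hqS : ∀ y ∈ q.support, y ∈ S) (hru : G.Adj r u) (hu : u ∉ S) {m : ℕ}
    (hm : ∀ v (hv : v ∉ S), (G.induce Sᶜ).Reachable ⟨u, hu⟩ ⟨v, hv⟩ → G.dist a v ≤ m) :
    ((G.induce Sᶜ).connectedComponentMk ⟨u, hu⟩).supp.ncard + q.length ≤ m := by
  have hdist := fun v (hv : v ∉ S) huv =>
    hG.dist_eq_length_add_dist_induce_compl hq hqS hru hu hv huv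
  have hqm := hm u hu .rfl
  rw [hdist u hu .rfl, dist_self] at hqm
  have hend : ((G.induce Sᶜ).neighborSet ⟨u, hu⟩).ncard < (G.neighborSet u).ncard :=
    ncard_neighborSet_induce_lt _ (Set.notMem_compl_iff.mpr (hqS r q.end_mem_support)) hru.symm
  have := ncard_supp_le_of_forall_dist_lt (H := G.induce Sᶜ) (u := ⟨u, hu⟩) (m := m - q.length)
    (fun v => (ncard_neighborSet_induce_le _ v).trans (hdeg v v.2))
    (by have := hdeg u hu; omega)
    (fun ⟨v, hv⟩ huv => by have := hdist v hv huv; have := hm v hv huv; omega)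
  omega

lemma IsTree.card_connectedComponent_induce_compl_singleton (hG : G.IsTree) (x : V) :
    Nat.card (G.induce ({x}ᶜ : Set V)).ConnectedComponent = (G.neighborSet x).ncard := by
  rw [hG.card_connectedComponent_induce_compl Connected.of_subsingleton]
  congr 1
  ext u
  simpa using fun h : G.Adj x u => h.ne'

end DeleteSubtree

section Star

variable {V : Type*} [Finite V] {G : SimpleGraph V} {x w : V} {s i : ℕ}

lemma IsTree.ncard_supp_induce_compl_singleton_le (hG : G.IsTree)
    (hother : ∀ v, v ≠ x → (G.neighborSet v).ncard ≤ 2)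
    (c : (G.induce ({x}ᶜ : Set V)).ConnectedComponent) {m : ℕ}
    (hm : ∀ v ∈ c.supp, G.dist x v ≤ m) : c.supp.ncard ≤ m := by
  obtain ⟨r, hr, u, hu, hru, rfl⟩ :=
    hG.connected.exists_adj_eq_connectedComponentMk (Set.singleton_nonempty x) c
  obtain rfl : x = r := hr.symm
  simpa using hG.isAcyclic.ncard_supp_add_length_le (S := {x}) hother Walk.IsPath.nil
    (by simp) hru hu fun v hv huv => hm ⟨v, hv⟩ (ConnectedComponent.sound huv.symm)

lemma IsTree.exists_isPathGraph_induce_compl_singleton (hG : G.IsTree)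
    (hdeg : (G.neighborSet x).ncard = s) (hother : ∀ v, v ≠ x → (G.neighborSet v).ncard ≤ 2)
    (hheight : ∀ v, G.dist x v ≤ i) (hcard : Nat.card V = s * i) (hs : 1 ≤ s) (hi : 1 ≤ i) :
    Nat.card (G.induce ({x}ᶜ : Set V)).ConnectedComponent = s ∧
      ∃ c₀ : (G.induce ({x}ᶜ : Set V)).ConnectedComponent,
        IsPathGraph ((G.induce ({x}ᶜ : Set V)).induce c₀.supp) (i - 1) ∧
        ∀ c : (G.induce ({x}ᶜ : Set V)).ConnectedComponent, c ≠ c₀ →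
          IsPathGraph ((G.induce ({x}ᶜ : Set V)).induce c.supp) i := by
  have hk := (hG.card_connectedComponent_induce_compl_singleton x).trans hdeg
  have hW : Nat.card ({x}ᶜ : Set V) = s * i - 1 := by
    rw [Nat.card_coe_set_eq, Set.ncard_compl, hcard, Set.ncard_singleton]
  have hsize c := hG.ncard_supp_induce_compl_singleton_le hother c fun v _ => hheight v
  obtain ⟨c₀, hc₀⟩ := exists_ncard_supp_lt_of_card_lt (m := i)
    (H := G.induce ({x}ᶜ : Set V)) (by rw [hW, hk]; have := Nat.mul_pos hs hi; omega)
  refine ⟨hk, c₀, isPathGraph_of_ncard_supp_le (hG.isAcyclic.induce _)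
    (fun v => (ncard_neighborSet_induce_le _ v).trans (hother v v.2)) c₀ (by omega)
    (fun c _ => hsize c) ?_⟩
  rw [hk, hW]
  obtain ⟨s, rfl⟩ := Nat.exists_eq_add_of_le' hs
  obtain ⟨i, rfl⟩ := Nat.exists_eq_add_of_le' hi
  simp only [Nat.add_sub_cancel, add_mul, mul_add]
  omega

lemma IsTree.dist_eq_one_and_eq_three (hG : G.IsTree) (hs : 3 ≤ s)
    (hdeg : (G.neighborSet x).ncard = s) (hother : ∀ v, v ≠ x → (G.neighborSet v).ncard ≤ 2)
    (hheight : ∀ v, G.dist w v ≤ i) (hcard : Nat.card V = s * i) (hwx : w ≠ x) :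
    G.dist x w = 1 ∧ s = 3 := by
  have hd : 1 ≤ G.dist x w := hG.connected.pos_dist_of_ne hwx.symm
  have hdi : G.dist x w ≤ i := dist_comm (G := G) ▸ hheight x
  set cw := (G.induce ({x}ᶜ : Set V)).connectedComponentMk ⟨w, hwx⟩
  have hcw : cw.supp.ncard ≤ G.dist x w + i :=
    hG.ncard_supp_induce_compl_singleton_le hother cw fun v _ =>
      (hG.connected.dist_triangle (v := w)).trans (by have := hheight v; omega)
  have hrest : ∀ c ≠ cw, c.supp.ncard ≤ i - G.dist x w := by
    intro c hc
    refine hG.ncard_supp_induce_compl_singleton_le hother c fun v hv => ?_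
    have hwv := hG.connected.dist_eq_dist_add_dist_of_not_reachable_induce hwx v.2
      fun hr => hc (hv.symm.trans (ConnectedComponent.sound hr).symm)
    have := hheight v
    rw [dist_comm (u := w) (v := x)] at hwv
    omega
  have := card_le_of_ncard_supp_le cw hcw hrest
  rw [Nat.card_coe_set_eq, Set.ncard_compl, hcard, Set.ncard_singleton,
    (hG.card_connectedComponent_induce_compl_singleton x).trans hdeg] at this
  obtain ⟨s, rfl⟩ := Nat.exists_eq_add_of_le' hs
  obtain ⟨i, rfl⟩ := Nat.exists_eq_add_of_le' hdi
  obtain ⟨d, hd⟩ := Nat.exists_eq_add_of_le' hd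
  rw [hd] at this ⊢
  rw [Nat.add_sub_cancel, show s + 3 - 1 = s + 2 by omega] at this
  ring_nf at this
  omega

lemma IsTree.card_connectedComponent_induce_compl_pair (hG : G.IsTree) (hxw : G.Adj x w) :
    Nat.card (G.induce ({x, w} : Set V)ᶜ).ConnectedComponent =
      (G.neighborSet x \ {w}).ncard + (G.neighborSet w \ {x}).ncard := by
  classical
  have hdisj : Disjoint (G.neighborSet x \ {w}) (G.neighborSet w \ {x}) :=
    Set.disjoint_left.mpr fun u ⟨hxu, _⟩ ⟨hwu, _⟩ =>
      hG.isAcyclic.cliqueFree le_rfl {x, w, u} (is3Clique_triple_iff.mpr ⟨hxw, hxu, hwu⟩)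
  rw [hG.card_connectedComponent_induce_compl (induce_pair_connected_of_adj hxw),
    ← Set.ncard_union_eq hdisj]
  congr 1
  ext u
  simp only [Set.mem_insert_iff, Set.mem_singleton_iff, not_or, exists_eq_or_imp,
    exists_eq_left, Set.mem_ofPred_eq, Set.mem_union, Set.mem_sdiff, mem_neighborSet]
  grind [Adj.ne]

lemma IsTree.ncard_supp_induce_compl_pair_le (hG : G.IsTree) (hxw : G.Adj x w)
    (hother : ∀ v, v ≠ x → (G.neighborSet v).ncard ≤ 2) (hheight : ∀ v, G.dist w v ≤ i)
    (c : (G.induce ({x, w} : Set V)ᶜ).ConnectedComponent) :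
    c.supp.ncard ≤ i - 1 ∨ ∃ u, ∃ hu : u ∉ ({x, w} : Set V), G.Adj w u ∧
      c = (G.induce ({x, w} : Set V)ᶜ).connectedComponentMk ⟨u, hu⟩ ∧ c.supp.ncard ≤ i := by
  have hdeg : ∀ v ∉ ({x, w} : Set V), (G.neighborSet v).ncard ≤ 2 :=
    fun v hv => hother v fun h => hv (Or.inl h)
  obtain ⟨r, hr | hr, u, hu, hru, rfl⟩ :=
    hG.connected.exists_adj_eq_connectedComponentMk (Set.insert_nonempty x {w}) c
  · obtain rfl : x = r := hr.symm
    left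
    have := hG.isAcyclic.ncard_supp_add_length_le hdeg (Path.singleton hxw.symm).2
      (by simp) hru hu fun v _ _ => hheight v
    simp only [Path.singleton_coe, Walk.length_cons, Walk.length_nil] at this
    omega
  · obtain rfl : w = r := hr.symm
    have := hG.isAcyclic.ncard_supp_add_length_le hdeg Walk.IsPath.nil (by simp) hru hu
      fun v _ _ => hheight v
    exact Or.inr ⟨u, hu, hru, rfl, by simpa using this⟩

lemma IsTree.exists_isPathGraph_induce_compl_pair (hG : G.IsTree) (hxw : G.Adj x w)
    (hdeg : (G.neighborSet x).ncard = 3) (hother : ∀ v, v ≠ x → (G.neighborSet v).ncard ≤ 2)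
    (hheight : ∀ v, G.dist w v ≤ i) (hcard : Nat.card V = 3 * i) (hi : 1 ≤ i) :
    Nat.card (G.induce ({x, w} : Set V)ᶜ).ConnectedComponent = 3 ∧
      ∃ c₀ : (G.induce ({x, w} : Set V)ᶜ).ConnectedComponent,
        IsPathGraph ((G.induce ({x, w} : Set V)ᶜ).induce c₀.supp) i ∧
        ∀ c : (G.induce ({x, w} : Set V)ᶜ).ConnectedComponent, c ≠ c₀ →
          IsPathGraph ((G.induce ({x, w} : Set V)ᶜ).induce c.supp) (i - 1) := by
  have hW : Nat.card (({x, w} : Set V)ᶜ : Set V) = 3 * i - 2 := by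
    rw [Nat.card_coe_set_eq, Set.ncard_compl, hcard, Set.ncard_pair hxw.ne]
  have hk := hG.card_connectedComponent_induce_compl_pair hxw
  rw [Set.ncard_sdiff_singleton_of_mem (s := G.neighborSet x) hxw, hdeg] at hk
  have hsize := hG.ncard_supp_induce_compl_pair_le hxw hother hheight
  obtain ⟨u', hu'⟩ : ∃ u', G.neighborSet w \ {x} = {u'} := by
    refine Set.ncard_eq_one.mp (le_antisymm ?_ (Nat.one_le_iff_ne_zero.mpr fun h0 => ?_))
    · rw [Set.ncard_sdiff_singleton_of_mem (s := G.neighborSet w) hxw.symm]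
      have := hother w hxw.ne'
      omega
    have hall (c : (G.induce ({x, w} : Set V)ᶜ).ConnectedComponent) : c.supp.ncard ≤ i - 1 :=
      (hsize c).resolve_right fun ⟨u, hu, hwu, _⟩ =>
        ((Set.ncard_eq_zero).mp h0).subset ⟨hwu, fun h => hu (Or.inl h)⟩
    obtain ⟨c⟩ := (Nat.card_pos_iff.mp
      (show 0 < Nat.card (G.induce ({x, w} : Set V)ᶜ).ConnectedComponent by omega)).1
    have := card_le_of_ncard_supp_le c (hall c) fun c _ => hall c
    rw [hW, hk, h0] at this
    omega
  obtain ⟨hwu', hu'x⟩ : u' ∈ G.neighborSet w \ {x} := hu' ▸ rfl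
  have hu'S : u' ∉ ({x, w} : Set V) := by simpa [hwu'.ne'] using hu'x
  set c₀ := (G.induce ({x, w} : Set V)ᶜ).connectedComponentMk ⟨u', hu'S⟩
  have h₀ : c₀.supp.ncard ≤ i :=
    (hsize c₀).elim (fun h => h.trans (Nat.sub_le _ _)) fun ⟨_, _, _, _, h⟩ => h
  have hrest : ∀ c ≠ c₀, c.supp.ncard ≤ i - 1 := fun c hc => (hsize c).resolve_right
    fun ⟨u, hu, hwu, hcu, _⟩ => by
      obtain rfl : u = u' := hu'.subset ⟨hwu, fun h => hu (Or.inl h)⟩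
      exact hc hcu
  refine ⟨by rw [hk, hu', Set.ncard_singleton], c₀, isPathGraph_of_ncard_supp_le
    (hG.isAcyclic.induce _) (fun ⟨v, hv⟩ => (ncard_neighborSet_induce_le _ _).trans
      (hother v fun h => hv (Or.inl h))) c₀ h₀ hrest ?_⟩
  rw [hk, hu', Set.ncard_singleton, hW]
  omega

end Star

end SimpleGraph

/-- If a generalized star `SP_s(x)` of height at most `i` from `w` has `s·i`
vertices, then either `w = x` and `SP_s(x) - x = (s-1)P_i + P_{i-1}`, or
`d(x,w) = 1`, `s = 3` and `SP_s(x) - {x, w} = P_i + 2P_{i-1}`. -/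
theorem stmt_2 {V : Type*} (G : SimpleGraph V) (x w : V) (s i : ℕ)
    (hs : 3 ≤ s) (htree : G.IsTree)
    (hdeg : (G.neighborSet x).ncard = s)
    (hother : ∀ v : V, v ≠ x → (G.neighborSet v).ncard ≤ 2)
    (hheight : ∀ v : V, G.dist w v ≤ i)
    (hcard : Nat.card V = s * i) :
    (w = x ∧
      Nat.card (G.induce ({x}ᶜ : Set V)).ConnectedComponent = s ∧
      ∃ c₀ : (G.induce ({x}ᶜ : Set V)).ConnectedComponent,
        IsPathGraph ((G.induce ({x}ᶜ : Set V)).induce c₀.supp) (i - 1) ∧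
        ∀ c : (G.induce ({x}ᶜ : Set V)).ConnectedComponent, c ≠ c₀ →
          IsPathGraph ((G.induce ({x}ᶜ : Set V)).induce c.supp) i) ∨
    (G.dist x w = 1 ∧ s = 3 ∧
      Nat.card (G.induce (({x, w} : Set V)ᶜ)).ConnectedComponent = 3 ∧
      ∃ c₀ : (G.induce (({x, w} : Set V)ᶜ)).ConnectedComponent,
        IsPathGraph ((G.induce (({x, w} : Set V)ᶜ)).induce c₀.supp) i ∧
        ∀ c : (G.induce (({x, w} : Set V)ᶜ)).ConnectedComponent, c ≠ c₀ →
          IsPathGraph ((G.induce (({x, w} : Set V)ᶜ)).induce c.supp) (i - 1)) := by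
  have hi : i ≠ 0 := by
    rintro rfl
    have hw v : v = w := (htree.connected.dist_eq_zero_iff.mp (Nat.le_zero.mp (hheight v))).symm
    have : Subsingleton V := ⟨fun a b => (hw a).trans (hw b).symm⟩
    have : Nonempty V := ⟨x⟩
    have : 0 < Nat.card V := Nat.card_pos
    omega
  have : Finite V := Nat.finite_of_card_ne_zero (by rw [hcard]; positivity)
  rcases eq_or_ne w x with rfl | hwx
  · exact Or.inl ⟨rfl, htree.exists_isPathGraph_induce_compl_singleton hdeg hother hheight hcard
      (by omega) (by omega)⟩
  · obtain ⟨hd, rfl⟩ := htree.dist_eq_one_and_eq_three hs hdeg hother hheight hcard hwx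
    exact Or.inr ⟨hd, rfl, htree.exists_isPathGraph_induce_compl_pair
      (dist_eq_one_iff_adj.mp hd) hdeg hother hheight hcard (by omega)⟩
end

section
/- Let $U_g^{a_1,a_2}$ ($a_1 \ge a_2 \ge 1$) be the unicyclic graph of order $n = q^2 + r$ ($1 \le r \le 2q+1$) obtained from a cycle of length $g$ by attaching two pendant paths of orders $a_1,a_2$ at one vertex. If $3 \le g \le r$ or $a_1 \ge q^2 - \lfloor g/2 \rfloor$, then $b(U_g^{a_1,a_2}) \ge q+1$. -/
open SimpleGraph

/-- `G` is the unicyclic graph `U_g^{a₁,a₂}`: a cycle of length `g` with two pendant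
paths of orders `a₁` and `a₂` attached at the vertex `x` (which has degree 4); all
other vertices have degree at most 2, the unique cycle has length `g`, `G` has
`g + a₁ + a₂` vertices and edges, and deleting `x` leaves three components of
orders `g - 1`, `a₁` and `a₂`. -/
def IsUTwoArm {V : Type*} (G : SimpleGraph V) (x : V) (g a₁ a₂ : ℕ) : Prop :=
  G.Connected ∧ Nat.card V = g + a₁ + a₂ ∧ Nat.card G.edgeSet = g + a₁ + a₂ ∧
  G.girth = (g : ℕ∞) ∧
  (G.neighborSet x).ncard = 4 ∧
  (∀ v : V, v ≠ x → (G.neighborSet v).ncard ≤ 2) ∧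
  ∃ c₁ c₂ c₃ : (G.induce ({x}ᶜ : Set V)).ConnectedComponent,
    c₁ ≠ c₂ ∧ c₁ ≠ c₃ ∧ c₂ ≠ c₃ ∧
    (∀ c : (G.induce ({x}ᶜ : Set V)).ConnectedComponent, c = c₁ ∨ c = c₂ ∨ c = c₃) ∧
    Nat.card c₁.supp = g - 1 ∧ Nat.card c₂.supp = a₁ ∧ Nat.card c₃.supp = a₂

/-!
Deleting the vertex `x` of degree four leaves three branches: the cycle minus `x`, with `g - 1`
vertices and two neighbours of `x`, and the two pendant paths, with one neighbour of `x` each.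
All other degrees are at most two, so a branch with `b` neighbours of `x` has at most `b` vertices
at each distance from `x`; hence it contains a vertex at distance at least its order divided by
`b` from `x`. Two vertices in different branches are at distance the sum of their distances to
`x`, which gives pairs of vertices at distance `a₁ + a₂` and `a₁ + ⌊g/2⌋`, and either hypothesis
makes one of these at least `q²`. Finally, the fires of a burning sequence of length `k` cover the
`d + 1` vertices of a geodesic of length `d`, and the fire of radius `k - 1 - i` meets at most
`2 (k - 1 - i) + 1` of them, so `d + 1 ≤ k²`.
-/

namespace SimpleGraph

variable {V : Type*} {G : SimpleGraph V}

theorem Walk.dist_getVert_of_length_eq_dist {u v : V} (p : G.Walk u v)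
    (hp : p.length = G.dist u v) {m : ℕ} (hm : m ≤ p.length) : G.dist u (p.getVert m) = m := by
  have hle : G.dist u (p.getVert m) ≤ m := by
    simpa [Walk.take_length, hm] using G.dist_le (p.take m)
  have hdrop : G.dist (p.getVert m) v ≤ p.length - m := by
    simpa [Walk.drop_length] using G.dist_le (p.drop m)
  have := (p.take m).reachable.dist_triangle_left v
  omega

theorem Reachable.exists_dist_eq {u v : V} (h : G.Reachable u v) {m : ℕ} (hm : m ≤ G.dist u v) :
    ∃ w, G.dist u w = m := by
  obtain ⟨p, hp⟩ := h.exists_walk_length_eq_dist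
  exact ⟨p.getVert m, p.dist_getVert_of_length_eq_dist hp (hp ▸ hm)⟩

theorem exists_adj_dist_eq_of_dist_eq_succ {u v : V} {d : ℕ} (h : G.dist u v = d + 1) :
    ∃ w, G.Adj w v ∧ G.dist u w = d := by
  obtain ⟨p, hp⟩ :=
    (Reachable.of_dist_ne_zero (by omega : G.dist u v ≠ 0)).exists_walk_length_eq_dist
  refine ⟨p.getVert d, ?_, p.dist_getVert_of_length_eq_dist hp (by omega)⟩
  have hv : p.getVert (d + 1) = v := by rw [← h, ← hp, Walk.getVert_length]
  have := p.adj_getVert_succ (i := d) (by omega)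
  rwa [hv] at this

end SimpleGraph

theorem Finset.sum_range_two_mul_sub_one_sub_add_one (k : ℕ) :
    ∑ i ∈ Finset.range k, (2 * (k - 1 - i) + 1) = k ^ 2 := by
  rw [Finset.sum_range_reflect (fun j => 2 * j + 1) k]
  induction k with
  | zero => rfl
  | succ k ih => rw [Finset.sum_range_succ, ih]; ring

namespace IsBurnSeq

variable {V : Type*} {G : SimpleGraph V}

theorem dist_add_one_le_sq (hG : G.Connected) {k : ℕ} {s : ℕ → V} (hs : IsBurnSeq G k s)
    (u v : V) : G.dist u v + 1 ≤ k ^ 2 := by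
  have hcover : Finset.Icc 0 (G.dist u v) ⊆ (Finset.range k).biUnion fun i =>
      Finset.Icc (G.dist u (s i) - (k - 1 - i)) (G.dist u (s i) + (k - 1 - i)) := by
    intro m hm
    obtain ⟨w, hw⟩ := (hG u v).exists_dist_eq (Finset.mem_Icc.mp hm).2
    obtain ⟨i, hik, hi⟩ := hs.2 w
    have hsw : G.dist (s i) w ≤ k - 1 - i := by
      rwa [← (hG _ _).coe_dist_eq_edist, Nat.cast_le] at hi
    have h₁ := (hG u (s i)).dist_triangle_left w
    have h₂ := (hG u w).dist_triangle_left (s i)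
    rw [dist_comm (u := w)] at h₂
    simp only [Finset.mem_biUnion, Finset.mem_range, Finset.mem_Icc]
    exact ⟨i, hik, by omega, by omega⟩
  calc G.dist u v + 1 = (Finset.Icc 0 (G.dist u v)).card := by simp
    _ ≤ ∑ i ∈ Finset.range k,
          (Finset.Icc (G.dist u (s i) - (k - 1 - i)) (G.dist u (s i) + (k - 1 - i))).card :=
        (Finset.card_le_card hcover).trans Finset.card_biUnion_le
    _ ≤ ∑ i ∈ Finset.range k, (2 * (k - 1 - i) + 1) :=
        Finset.sum_le_sum fun i _ => by rw [Nat.card_Icc]; omega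
    _ = k ^ 2 := Finset.sum_range_two_mul_sub_one_sub_add_one k

end IsBurnSeq

theorem SimpleGraph.Connected.exists_isBurnSeq {V : Type*} [Finite V] {G : SimpleGraph V}
    (hG : G.Connected) : ∃ k s, IsBurnSeq G k s := by
  obtain ⟨u⟩ := hG.nonempty
  have : Nonempty V := ⟨u⟩
  obtain ⟨z, hz⟩ := Finite.exists_max (G.dist u)
  have hex : ∀ i, ∃ w, i ≤ G.dist u z → G.dist u w = i := fun i =>
    if hi : i ≤ G.dist u z then ((hG u z).exists_dist_eq hi).imp fun _ h _ => h
    else ⟨u, fun h => absurd h hi⟩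
  choose s hs using hex
  refine ⟨G.dist u z + 1, s, fun i j hij hj => ?_, fun v => ⟨0, Nat.succ_pos _, ?_⟩⟩
  · have := (hG u (s i)).dist_triangle_left (s j)
    have := hs i (by omega)
    have := hs j (by omega)
    rw [← (hG _ _).coe_dist_eq_edist, Nat.cast_le]
    omega
  · have hs₀ : s 0 = u := ((hG u _).dist_eq_zero_iff.mp (hs 0 (Nat.zero_le _))).symm
    rw [hs₀, ← (hG _ _).coe_dist_eq_edist, Nat.cast_le]
    simpa using hz v

theorem le_burningNumber_of_sq_le_dist {V : Type*} [Finite V] {G : SimpleGraph V}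
    (hG : G.Connected) {q : ℕ} {u v : V} (h : q ^ 2 ≤ G.dist u v) : q + 1 ≤ burningNumber G := by
  obtain ⟨k₀, s₀, hs₀⟩ := hG.exists_isBurnSeq
  refine le_csInf ⟨k₀, s₀, hs₀⟩ ?_
  rintro k ⟨s, hs⟩
  have := hs.dist_add_one_le_sq hG u v
  by_contra! hk
  have := Nat.pow_le_pow_left (Nat.lt_succ_iff.mp hk) 2
  omega

namespace SimpleGraph

variable {V : Type*} {G : SimpleGraph V}

namespace ComponentCompl

variable {K : Set V}

theorem mem_of_walk (C : G.ComponentCompl K) {a b : V} (p : G.Walk a b)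
    (hp : ∀ y ∈ p.support, y ∉ K) (ha : a ∈ C) : b ∈ C := by
  induction p with
  | nil => exact ha
  | cons h q ih =>
    simp only [Walk.support_cons, List.mem_cons, forall_eq_or_imp] at hp
    exact ih hp.2 (mem_of_adj _ _ ha (hp.2 _ q.start_mem_support) h)

theorem coe_subset_of_forall_adj {S : Set V}
    (hS : ∀ v w, v ∈ S → v ∉ K → w ∉ K → G.Adj v w → w ∈ S) {C : G.ComponentCompl K} {s : V}
    (hsC : s ∈ C) (hsS : s ∈ S) : (C : Set V) ⊆ S := by
  rintro v ⟨hv, rfl⟩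
  obtain ⟨hs, hsv⟩ := hsC
  suffices ∀ {a b : ↥Kᶜ}, (G.induce Kᶜ).Walk a b → a.1 ∈ S → b.1 ∈ S from
    (ConnectedComponent.exact hsv).elim (this · hsS)
  intro a b p
  induction p with
  | nil => exact id
  | @cons a b _ h _ ih => exact fun ha => ih (hS a b ha a.2 b.2 h)

theorem ncard_coe (C : G.ComponentCompl K) :
    (C : Set V).ncard = Nat.card (ConnectedComponent.supp C) := by
  have : (C : Set V) = Subtype.val '' ConnectedComponent.supp C := by
    ext v
    simp [ConnectedComponent.mem_supp_iff]
  rw [this, Set.ncard_image_of_injective _ Subtype.val_injective, Nat.card_coe_set_eq]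

theorem dist_add_dist_le {x : V} (hG : G.Connected) {C D : G.ComponentCompl {x}} (hCD : C ≠ D)
    {u v : V} (hu : u ∈ C) (hv : v ∈ D) : G.dist x u + G.dist x v ≤ G.dist u v := by
  classical
  obtain ⟨p, hp⟩ := hG.exists_walk_length_eq_dist u v
  by_cases hx : x ∈ p.support
  · have hlen := congrArg Walk.length (p.take_spec hx)
    rw [Walk.length_append] at hlen
    have h₁ := G.dist_le (p.takeUntil x hx)
    have h₂ := G.dist_le (p.dropUntil x hx)
    rw [dist_comm] at h₁
    omega
  · have hvC := C.mem_of_walk p (fun y hy (hyx : y = x) => hx (hyx ▸ hy)) hu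
    exact absurd hv (Set.disjoint_left.mp (ComponentCompl.pairwise_disjoint hCD) hvC)

variable [Finite V]

theorem ncard_neighborSet_inter_add_add_le (x : V) {C₀ C₁ C₂ : G.ComponentCompl K}
    (h₀₁ : C₀ ≠ C₁) (h₀₂ : C₀ ≠ C₂) (h₁₂ : C₁ ≠ C₂) :
    (G.neighborSet x ∩ C₀).ncard + (G.neighborSet x ∩ C₁).ncard + (G.neighborSet x ∩ C₂).ncard
      ≤ (G.neighborSet x).ncard := by
  have hdisj : ∀ C D : G.ComponentCompl K, C ≠ D →
      Disjoint (G.neighborSet x ∩ C) (G.neighborSet x ∩ D) := fun C D h =>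
    (ComponentCompl.pairwise_disjoint h).mono Set.inter_subset_right Set.inter_subset_right
  rw [← Set.ncard_union_eq (hdisj _ _ h₀₁),
    ← Set.ncard_union_eq (Set.disjoint_union_left.mpr ⟨hdisj _ _ h₀₂, hdisj _ _ h₁₂⟩)]
  exact Set.ncard_le_ncard (Set.union_subset
    (Set.union_subset Set.inter_subset_left Set.inter_subset_left) Set.inter_subset_left)

theorem one_le_ncard_neighborSet_inter {x : V} (hG : G.Connected) (C : G.ComponentCompl {x}) :
    1 ≤ (G.neighborSet x ∩ C).ncard := by
  obtain ⟨⟨v, y⟩, hv, hy, hvy⟩ :=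
    C.exists_adj_boundary_pair hG.preconnected (Set.singleton_nonempty x)
  obtain rfl : y = x := hy
  exact (Set.ncard_pos (Set.toFinite _)).mpr ⟨v, hvy.symm, hv⟩

variable {x : V} {C : G.ComponentCompl {x}}

theorem ncard_inter_dist_succ_le (hdeg : ∀ v ∈ C, (G.neighborSet v).ncard ≤ 2) {d : ℕ}
    (hd : 1 ≤ d) :
    ((C : Set V) ∩ {v | G.dist x v = d + 1}).ncard ≤
      ((C : Set V) ∩ {v | G.dist x v = d}).ncard := by
  choose! f hf using fun v (hv : G.dist x v = d + 1) => exists_adj_dist_eq_of_dist_eq_succ hv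
  have hfC : ∀ v ∈ (C : Set V) ∩ {v | G.dist x v = d + 1}, f v ∈ C := by
    rintro v ⟨hvC, hv⟩
    refine C.mem_of_adj v (f v) hvC (fun (hfx : f v = x) => ?_) (hf v hv).1.symm
    have := (hf v hv).2
    rw [hfx, dist_self] at this
    omega
  refine Set.ncard_le_ncard_of_injOn f (fun v hv => ⟨hfC v hv, (hf v hv.2).2⟩) ?_
  intro v₁ hv₁ v₂ hv₂ heq
  by_contra hne
  -- a common predecessor of `v₁ ≠ v₂` would have its own predecessor as a third neighbour
  obtain ⟨w, hw, hdw⟩ := exists_adj_dist_eq_of_dist_eq_succ (u := x) (v := f v₁) (d := d - 1)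
    (by rw [(hf v₁ hv₁.2).2]; omega)
  have hthree : 2 < (G.neighborSet (f v₁)).ncard := (Set.two_lt_ncard (Set.toFinite _)).mpr
    ⟨w, hw.symm, v₁, (hf v₁ hv₁.2).1, v₂, heq ▸ (hf v₂ hv₂.2).1,
      fun h => by rw [h, hv₁.2] at hdw; omega, fun h => by rw [h, hv₂.2] at hdw; omega, hne⟩
  exact absurd (hdeg _ (hfC v₁ hv₁)) (not_le.mpr hthree)

theorem ncard_inter_dist_le (hdeg : ∀ v ∈ C, (G.neighborSet v).ncard ≤ 2) {d : ℕ} (hd : 1 ≤ d) :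
    ((C : Set V) ∩ {v | G.dist x v = d}).ncard ≤ (G.neighborSet x ∩ C).ncard := by
  induction d, hd using Nat.le_induction with
  | base =>
    refine (congrArg Set.ncard ?_).le
    ext v
    simp [dist_eq_one_iff_adj, and_comm]
  | succ d hd ih => exact (ncard_inter_dist_succ_le hdeg hd).trans ih

theorem exists_ncard_le_mul_dist (hG : G.Connected) (hdeg : ∀ v ∈ C, (G.neighborSet v).ncard ≤ 2) :
    ∃ v ∈ C, (C : Set V).ncard ≤ (G.neighborSet x ∩ C).ncard * G.dist x v := by
  obtain ⟨v, hv, hmax⟩ := Set.exists_max_image _ (G.dist x) (Set.toFinite _) C.nonempty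
  refine ⟨v, hv, ?_⟩
  have hcover :
      (C : Set V) ⊆ ⋃ d ∈ Finset.Icc 1 (G.dist x v), (C : Set V) ∩ {w | G.dist x w = d} := by
    intro w hw
    have hwx : w ≠ x := fun h => hw.1 h
    simp only [Set.mem_iUnion, Finset.mem_Icc]
    exact ⟨G.dist x w, ⟨hG.pos_dist_of_ne hwx.symm, hmax w hw⟩, hw, rfl⟩
  calc (C : Set V).ncard
      ≤ ∑ d ∈ Finset.Icc 1 (G.dist x v), ((C : Set V) ∩ {w | G.dist x w = d}).ncard :=
        (Set.ncard_le_ncard hcover).trans (Finset.set_ncard_biUnion_le _ _)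
    _ ≤ ∑ d ∈ Finset.Icc 1 (G.dist x v), (G.neighborSet x ∩ C).ncard :=
        Finset.sum_le_sum fun d hd => ncard_inter_dist_le hdeg (Finset.mem_Icc.mp hd).1
    _ = _ := by simp [mul_comm]

end ComponentCompl

theorem Walk.IsCycle.neighborSet_subset_support [Finite V] {u v : V} {c : G.Walk u u}
    (hc : c.IsCycle) (hv : v ∈ c.support) (hdeg : (G.neighborSet v).ncard ≤ 2) :
    G.neighborSet v ⊆ {w | w ∈ c.support} := by
  have heq := Set.eq_of_subset_of_ncard_le (c.toSubgraph.neighborSet_subset v)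
    (hdeg.trans (hc.ncard_neighborSet_toSubgraph_eq_two hv).ge)
  rw [← heq, ← Walk.verts_toSubgraph]
  exact c.toSubgraph.neighborSet_subset_verts v

theorem Walk.IsCycle.mem_support_of_ncard_neighborSet_le_two [Finite V] (hG : G.Connected) {x : V}
    (hdeg : ∀ v, v ≠ x → (G.neighborSet v).ncard ≤ 2) {u : V} {c : G.Walk u u} (hc : c.IsCycle) :
    x ∈ c.support := by
  by_contra hx
  obtain ⟨d, -, hfst, hsnd⟩ :=
    (hG u x).some.exists_boundary_dart {w | w ∈ c.support} c.start_mem_support hx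
  exact hsnd (hc.neighborSet_subset_support hfst (hdeg _ fun h => hx (h ▸ hfst)) d.adj)

theorem Walk.IsCycle.exists_componentCompl [Finite V] {x : V}
    (hdeg : ∀ v, v ≠ x → (G.neighborSet v).ncard ≤ 2) {c : G.Walk x x} (hc : c.IsCycle) :
    ∃ C : G.ComponentCompl {x},
      (C : Set V).ncard = c.length - 1 ∧ 2 ≤ (G.neighborSet x ∩ C).ncard := by
  classical
  have hnil := hc.not_nil
  have hsnd : c.snd ∉ ({x} : Set V) := (c.adj_snd hnil).ne'
  have hsupp : ∀ y, y ∈ c.support → y ≠ x → y ∈ c.tail.support := fun y hy hyx => by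
    rw [← Walk.cons_support_tail hnil] at hy
    exact (List.mem_cons.mp hy).resolve_left hyx
  -- the cycle minus `x` is a whole branch at `x`, since its vertices have no neighbours off it
  set T : Set V := {y | y ∈ c.tail.support ∧ y ≠ x}
  have hTC : T ⊆ G.componentComplMk hsnd := fun y ⟨hy, hyx⟩ =>
    (G.componentComplMk hsnd).mem_of_walk (c.tail.takeUntil y hy)
      (fun z hz (hzx : z = x) =>
        Walk.endpoint_notMem_support_takeUntil hc.isPath_tail hy hyx.symm (hzx ▸ hz))
      (G.componentComplMk_mem hsnd)
  have hCT : (G.componentComplMk hsnd : Set V) ⊆ T := by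
    refine ComponentCompl.coe_subset_of_forall_adj ?_ (G.componentComplMk_mem hsnd)
      ⟨c.tail.start_mem_support, hsnd⟩
    rintro v w ⟨hv, -⟩ hvx hwx hvw
    have hvc : v ∈ c.support := by
      rw [← Walk.cons_support_tail hnil]
      exact List.mem_cons_of_mem _ hv
    exact ⟨hsupp w (hc.neighborSet_subset_support hvc (hdeg v hvx) hvw) hwx, hwx⟩
  refine ⟨G.componentComplMk hsnd, ?_, ?_⟩
  · have hT : T = ↑(c.tail.support.toFinset.erase x) := by
      ext y
      simp [T, and_comm]
    rw [← hTC.antisymm hCT, hT, Set.ncard_coe_finset,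
      Finset.card_erase_of_mem (List.mem_toFinset.mpr c.tail.end_mem_support),
      List.toFinset_card_of_nodup hc.isPath_tail.support_nodup, Walk.length_support,
      ← Walk.length_tail_add_one hnil]
  · calc 2 = (c.toSubgraph.neighborSet x).ncard :=
          (hc.ncard_neighborSet_toSubgraph_eq_two c.start_mem_support).symm
      _ ≤ _ := by
        refine Set.ncard_le_ncard fun w hw => ⟨c.toSubgraph.neighborSet_subset x hw, hTC ?_⟩
        have hwx : w ≠ x := (c.toSubgraph.adj_sub hw).ne'
        refine ⟨hsupp w ?_ hwx, hwx⟩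
        exact (Walk.mem_verts_toSubgraph c).mp (c.toSubgraph.neighborSet_subset_verts x hw)

end SimpleGraph

theorem exists_pairwise_ne_of_eq_or_eq_or_eq {α β : Type*} (f : α → β) {c₁ c₂ c₃ c : α}
    (h₁₂ : c₁ ≠ c₂) (h₁₃ : c₁ ≠ c₃) (h₂₃ : c₂ ≠ c₃) (hc : c = c₁ ∨ c = c₂ ∨ c = c₃)
    (hf : f c = f c₁) : ∃ d₁ d₂, c ≠ d₁ ∧ c ≠ d₂ ∧ d₁ ≠ d₂ ∧ f d₁ = f c₂ ∧ f d₂ = f c₃ := by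
  rcases hc with rfl | rfl | rfl
  · exact ⟨c₂, c₃, h₁₂, h₁₃, h₂₃, rfl, rfl⟩
  · exact ⟨c₁, c₃, h₁₂.symm, h₂₃, h₁₃, hf.symm, rfl⟩
  · exact ⟨c₂, c₁, h₂₃.symm, h₁₃.symm, h₁₂.symm, rfl, hf.symm⟩

theorem IsUTwoArm.exists_dist_ge {V : Type*} [Finite V] {G : SimpleGraph V} {x : V}
    {g a₁ a₂ : ℕ} (hU : IsUTwoArm G x g a₁ a₂) :
    ∃ u₁ u₂ u₀ : V, a₁ + a₂ ≤ G.dist u₁ u₂ ∧ a₁ + g / 2 ≤ G.dist u₁ u₀ := by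
  classical
  obtain ⟨hG, -, -, hg, hdegx, hdeg, c₁, c₂, c₃, h₁₂, h₁₃, h₂₃, hall, hc₁, hc₂, hc₃⟩ := hU
  simp only [← ComponentCompl.ncard_coe] at hc₁ hc₂ hc₃
  have hgirth : G.girth = g := by exact_mod_cast hg
  -- `girth` is `0` on acyclic graphs, which the nonempty branch `c₁` of order `g - 1` rules out
  have hcyc : ¬ G.IsAcyclic := fun h => by
    have := (Set.ncard_pos (Set.toFinite _)).mpr (ComponentCompl.nonempty c₁)
    rw [h.girth_eq_zero] at hgirth
    omega
  obtain ⟨a, c, hc, hlen⟩ := exists_girth_eq_length.mpr hcyc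
  have hx := hc.mem_support_of_ncard_neighborSet_le_two hG hdeg
  obtain ⟨C, hC, hNC⟩ := (hc.rotate hx).exists_componentCompl hdeg
  rw [Walk.length_rotate, ← hlen, hgirth] at hC
  -- the cycle branch `C` has order `g - 1`, so the other two branches have orders `a₁` and `a₂`
  obtain ⟨d₁, d₂, h₀₁, h₀₂, h₁₂', hd₁, hd₂⟩ := exists_pairwise_ne_of_eq_or_eq_or_eq
    (fun D : G.ComponentCompl {x} => (D : Set V).ncard) h₁₂ h₁₃ h₂₃ (hall C) (hC.trans hc₁.symm)
  have hN := ComponentCompl.ncard_neighborSet_inter_add_add_le x h₀₁ h₀₂ h₁₂'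
  have hN₁ := d₁.one_le_ncard_neighborSet_inter hG
  have hN₂ := d₂.one_le_ncard_neighborSet_inter hG
  have hdegC (D : G.ComponentCompl {x}) : ∀ v ∈ D, (G.neighborSet v).ncard ≤ 2 :=
    fun v hv => hdeg v hv.1
  obtain ⟨u₁, hu₁, hdu₁⟩ := d₁.exists_ncard_le_mul_dist hG (hdegC d₁)
  obtain ⟨u₂, hu₂, hdu₂⟩ := d₂.exists_ncard_le_mul_dist hG (hdegC d₂)
  obtain ⟨u₀, hu₀, hdu₀⟩ := C.exists_ncard_le_mul_dist hG (hdegC C)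
  rw [show (G.neighborSet x ∩ d₁).ncard = 1 by omega] at hdu₁
  rw [show (G.neighborSet x ∩ d₂).ncard = 1 by omega] at hdu₂
  rw [show (G.neighborSet x ∩ C).ncard = 2 by omega] at hdu₀
  have h₁₂d := ComponentCompl.dist_add_dist_le hG h₁₂' hu₁ hu₂
  have h₁₀d := ComponentCompl.dist_add_dist_le hG h₀₁.symm hu₁ hu₀
  exact ⟨u₁, u₂, u₀, by omega, by omega⟩

theorem stmt_16_general {V : Type*} [Fintype V] (G : SimpleGraph V) (x : V) (g a₁ a₂ n q r : ℕ)
    (hn : n = g + a₁ + a₂) (hnqr : n = q ^ 2 + r)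
    (hG : IsUTwoArm G x g a₁ a₂)
    (hcond : (3 ≤ g ∧ g ≤ r) ∨ q ^ 2 - g / 2 ≤ a₁) :
    q + 1 ≤ burningNumber G := by
  obtain ⟨u₁, u₂, u₀, h₁₂, h₁₀⟩ := hG.exists_dist_ge
  rcases hcond with ⟨-, hgr⟩ | ha₁
  · exact le_burningNumber_of_sq_le_dist hG.1 (u := u₁) (v := u₂) (by omega)
  · exact le_burningNumber_of_sq_le_dist hG.1 (u := u₁) (v := u₀) (by omega)

/-- For `U_g^{a₁,a₂}` (`a₁ ≥ a₂ ≥ 1`) of order `n = q² + r` with `1 ≤ r ≤ 2q + 1`: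
if `3 ≤ g ≤ r` or `a₁ ≥ q² - ⌊g/2⌋`, then `b(U_g^{a₁,a₂}) ≥ q + 1`. -/
theorem stmt_16 {V : Type*} [Fintype V] (G : SimpleGraph V) (x : V) (g a₁ a₂ n q r : ℕ)
    (ha : a₂ ≤ a₁) (ha2 : 1 ≤ a₂)
    (hn : n = g + a₁ + a₂) (hnqr : n = q ^ 2 + r) (hr1 : 1 ≤ r) (hr2 : r ≤ 2 * q + 1)
    (hG : IsUTwoArm G x g a₁ a₂)
    (hcond : (3 ≤ g ∧ g ≤ r) ∨ q ^ 2 - g / 2 ≤ a₁) :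
    q + 1 ≤ burningNumber G :=
  stmt_16_general G x g a₁ a₂ n q r hn hnqr hG hcond
end

section
/- Let $U_g^{a_1,a_2}$ ($a_1 \ge a_2 \ge 1$) be the unicyclic graph of order $n = q^2 + r$ ($1 \le r \le 2q+1$) obtained from a cycle of length $g$ by attaching two pendant paths of orders $a_1,a_2$ at one vertex. If $g \ge q^2 + 1$, then $b(U_g^{a_1,a_2}) \ge q+1$. -/
open SimpleGraph

/-!
Let `S` be the vertex set of the cycle (including `x`). Every vertex of `S` has at most two
neighbours in `S`, and `x` is the only vertex of `S` with a neighbour outside `S`. So the last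
step of a geodesic from a vertex of `S` to a vertex of `S` starts in `S`, each sphere around a
vertex of `S` meets `S` in at most two vertices, and a ball of radius `t` meets `S` in at most
`2t + 1` vertices (a ball centred outside `S` meets `S` inside the ball of the same radius
around `x`). A burning sequence of length `k` thus covers at most `∑ i < k, (2i + 1) = k²`
vertices of `S`, so `q² < g ≤ b(G)²`.
-/

namespace SimpleGraph

variable {V : Type*} {G : SimpleGraph V}

lemma Walk.sub_le_dist_getVert {u v : V} (p : G.Walk u v) (hp : p.length = G.dist u v)
    {i j : ℕ} (hij : i ≤ j) (hj : j ≤ p.length) : j - i ≤ G.dist (p.getVert i) (p.getVert j) := by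
  have hi : G.dist u (p.getVert i) ≤ i := (dist_le (p.take i)).trans (by simp)
  have hjv : G.dist (p.getVert j) v ≤ p.length - j := (dist_le (p.drop j)).trans (by simp)
  have h₁ := (p.take i).reachable.dist_triangle_left (p.getVert j)
  have h₂ := (p.drop j).reachable.dist_triangle_right u
  omega

lemma Connected.exists_isBurnSeq_s17 [Finite V] (hc : G.Connected) : ∃ k xs, IsBurnSeq G k xs := by
  obtain ⟨v₀⟩ := hc.nonempty
  have : Nonempty V := ⟨v₀⟩
  obtain ⟨u₀, hu₀⟩ := Finite.exists_max (G.dist v₀)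
  obtain ⟨p, hp⟩ := hc.exists_walk_length_eq_dist v₀ u₀
  refine ⟨p.length + 1, p.getVert, fun i j hij hj => ?_, fun v => ⟨0, by omega, ?_⟩⟩
  · rw [← (hc _ _).coe_dist_eq_edist]
    exact_mod_cast p.sub_le_dist_getVert hp hij.le (by omega)
  · rw [← (hc _ _).coe_dist_eq_edist, p.getVert_zero]
    exact_mod_cast (hu₀ v).trans hp.ge

lemma Connected.exists_isBurnSeq_burningNumber [Finite V] (hc : G.Connected) :
    ∃ xs, IsBurnSeq G (burningNumber G) xs :=
  Nat.sInf_mem (s := {k | ∃ xs, IsBurnSeq G k xs}) hc.exists_isBurnSeq_s17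

lemma Reachable.exists_adj_dist_eq_s17 {u v : V} {i : ℕ} (h : G.Reachable v u)
    (hd : G.dist v u = i + 1) : ∃ w, G.Adj w u ∧ G.dist v w = i := by
  obtain ⟨p, hp⟩ := h.exists_walk_length_eq_dist
  have hnil : ¬p.Nil := by rw [← Walk.length_eq_zero_iff]; omega
  have hadj := p.adj_penultimate hnil
  have hle : G.dist v p.penultimate ≤ i :=
    (dist_le p.dropLast).trans (by rw [Walk.length_dropLast]; omega)
  have hge := hadj.reachable.dist_triangle_right v
  rw [dist_eq_one_iff_adj.mpr hadj] at hge
  exact ⟨_, hadj, by omega⟩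

lemma sum_range_two_mul_add_one (k : ℕ) : ∑ i ∈ Finset.range k, (2 * i + 1) = k ^ 2 := by
  induction k with
  | zero => rfl
  | succ k ih => rw [Finset.sum_range_succ, ih]; ring

section OneExit

variable {S : Set V} {x : V}

lemma Reachable.dist_le_of_forall_exit (hexit : ∀ a b, G.Adj a b → a ∈ S → b ∉ S → a = x)
    {a b : V} (hab : G.Reachable a b) (ha : a ∈ S) (hb : b ∉ S) :
    G.dist a x ≤ G.dist a b := by
  classical
  obtain ⟨p, hp⟩ := hab.exists_walk_length_eq_dist
  obtain ⟨d, hd, hdS, hdS'⟩ := p.exists_boundary_dart S ha hb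
  have hx : x ∈ p.support := hexit _ _ d.adj hdS hdS' ▸ p.dart_fst_mem_support_of_mem_darts hd
  calc G.dist a x ≤ (p.takeUntil x hx).length := dist_le _
    _ ≤ p.length := p.length_takeUntil_le_length hx
    _ = G.dist a b := hp

lemma Connected.exists_adj_mem_dist_eq (hc : G.Connected)
    (hexit : ∀ a b, G.Adj a b → a ∈ S → b ∉ S → a = x)
    {u v : V} {i : ℕ} (hv : v ∈ S) (hu : u ∈ S) (hd : G.dist v u = i + 1) :
    ∃ w ∈ S, G.Adj w u ∧ G.dist v w = i := by
  obtain ⟨w, hwu, hdw⟩ := (hc v u).exists_adj_dist_eq_s17 hd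
  refine ⟨w, ?_, hwu, hdw⟩
  by_contra hw
  by_cases hux : u = x
  · have := (hc v w).dist_le_of_forall_exit hexit hv hw
    subst hux
    omega
  · exact hux (hexit u w hwu.symm hu hw)

variable [Finite V]

lemma Connected.ncard_sphere_le_two (hc : G.Connected)
    (hexit : ∀ a b, G.Adj a b → a ∈ S → b ∉ S → a = x)
    (hdeg : ∀ w ∈ S, {u ∈ S | G.Adj w u}.ncard ≤ 2) {v : V} (hv : v ∈ S) (j : ℕ) :
    {u ∈ S | G.dist v u = j + 1}.ncard ≤ 2 := by
  induction j with
  | zero =>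
    refine le_trans (Set.ncard_le_ncard fun u hu => ?_) (hdeg v hv)
    exact ⟨hu.1, dist_eq_one_iff_adj.mp hu.2⟩
  | succ j ih =>
    refine le_trans ?_ ih
    choose! f hfS hfu hfd using fun u (hu : u ∈ {u ∈ S | G.dist v u = j + 1 + 1}) =>
      hc.exists_adj_mem_dist_eq hexit hv hu.1 hu.2
    refine Set.ncard_le_ncard_of_injOn f (fun u hu => ⟨hfS u hu, hfd u hu⟩) ?_
    intro u₁ hu₁ u₂ hu₂ hf
    by_contra hne
    -- otherwise the common predecessor `f u₁` has three neighbours in `S`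
    obtain ⟨w', hw'S, hw'w, hw'd⟩ := hc.exists_adj_mem_dist_eq hexit hv (hfS u₁ hu₁) (hfd u₁ hu₁)
    have hsub : ({u₁, u₂, w'} : Set V) ⊆ {u ∈ S | G.Adj (f u₁) u} := by
      simp only [Set.insert_subset_iff, Set.singleton_subset_iff]
      exact ⟨⟨hu₁.1, hfu u₁ hu₁⟩, ⟨hu₂.1, hf ▸ hfu u₂ hu₂⟩, ⟨hw'S, hw'w.symm⟩⟩
    have h₁ : w' ≠ u₁ := by rintro rfl; have := hu₁.2; omega
    have h₂ : w' ≠ u₂ := by rintro rfl; have := hu₂.2; omega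
    have h₃ := Set.ncard_le_ncard hsub
    rw [Set.ncard_insert_of_notMem (by simp [hne, h₁.symm]),
      Set.ncard_pair h₂.symm] at h₃
    have := hdeg (f u₁) (hfS u₁ hu₁)
    omega

lemma Connected.ncard_ball_le_of_mem (hc : G.Connected)
    (hexit : ∀ a b, G.Adj a b → a ∈ S → b ∉ S → a = x)
    (hdeg : ∀ w ∈ S, {u ∈ S | G.Adj w u}.ncard ≤ 2) {v : V} (hv : v ∈ S) (t : ℕ) :
    {u ∈ S | G.dist v u ≤ t}.ncard ≤ 2 * t + 1 := by
  induction t with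
  | zero =>
    refine le_trans (Set.ncard_le_ncard (t := {v}) fun u hu => ?_) (by simp)
    exact ((hc v u).dist_eq_zero_iff.mp (Nat.le_zero.mp hu.2)).symm
  | succ t ih =>
    have hsplit : {u ∈ S | G.dist v u ≤ t + 1} ⊆
        {u ∈ S | G.dist v u ≤ t} ∪ {u ∈ S | G.dist v u = t + 1} := by
      rintro u ⟨huS, hu⟩
      rcases hu.lt_or_eq with hu | hu
      exacts [Or.inl ⟨huS, Nat.lt_succ_iff.mp hu⟩, Or.inr ⟨huS, hu⟩]
    calc _ ≤ _ := Set.ncard_le_ncard hsplit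
      _ ≤ _ := Set.ncard_union_le _ _
      _ ≤ 2 * t + 1 + 2 := add_le_add ih (hc.ncard_sphere_le_two hexit hdeg hv t)

lemma Connected.ncard_ball_le (hc : G.Connected)
    (hexit : ∀ a b, G.Adj a b → a ∈ S → b ∉ S → a = x)
    (hdeg : ∀ w ∈ S, {u ∈ S | G.Adj w u}.ncard ≤ 2) (hx : x ∈ S) (v : V) (t : ℕ) :
    {u ∈ S | G.dist v u ≤ t}.ncard ≤ 2 * t + 1 := by
  by_cases hv : v ∈ S
  · exact hc.ncard_ball_le_of_mem hexit hdeg hv t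
  have hsub : {u ∈ S | G.dist v u ≤ t} ⊆ {u ∈ S | G.dist x u ≤ t} := by
    rintro u ⟨huS, hu⟩
    have := (hc u v).dist_le_of_forall_exit hexit huS hv
    rw [dist_comm (u := v)] at hu
    exact ⟨huS, dist_comm.trans_le (this.trans hu)⟩
  exact (Set.ncard_le_ncard hsub).trans (hc.ncard_ball_le_of_mem hexit hdeg hx t)

lemma Connected.ncard_le_sq_of_isBurnSeq (hc : G.Connected)
    (hexit : ∀ a b, G.Adj a b → a ∈ S → b ∉ S → a = x)
    (hdeg : ∀ w ∈ S, {u ∈ S | G.Adj w u}.ncard ≤ 2) (hx : x ∈ S) {k : ℕ} {xs : ℕ → V}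
    (h : IsBurnSeq G k xs) : S.ncard ≤ k ^ 2 := by
  have hcover : S ⊆ ⋃ i ∈ Finset.range k, {u ∈ S | G.dist (xs i) u ≤ k - 1 - i} := by
    intro u hu
    obtain ⟨i, hik, hi⟩ := h.2 u
    rw [← (hc _ _).coe_dist_eq_edist] at hi
    exact Set.mem_biUnion (Finset.mem_range.mpr hik) ⟨hu, by exact_mod_cast hi⟩
  calc S.ncard ≤ ∑ i ∈ Finset.range k, {u ∈ S | G.dist (xs i) u ≤ k - 1 - i}.ncard :=
        (Set.ncard_le_ncard hcover).trans (Finset.set_ncard_biUnion_le _ _)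
    _ ≤ ∑ i ∈ Finset.range k, (2 * (k - 1 - i) + 1) :=
        Finset.sum_le_sum fun i _ => hc.ncard_ball_le hexit hdeg hx _ _
    _ = ∑ i ∈ Finset.range k, (2 * i + 1) := Finset.sum_range_reflect (fun i => 2 * i + 1) k
    _ = k ^ 2 := sum_range_two_mul_add_one k

end OneExit

section DeleteVertex

variable {x : V}

lemma notMem_image_supp (c : (G.induce ({x}ᶜ : Set V)).ConnectedComponent) :
    x ∉ Subtype.val '' c.supp := by
  rintro ⟨w, -, h⟩
  exact w.2 h

lemma mem_image_supp_of_adj {c : (G.induce ({x}ᶜ : Set V)).ConnectedComponent}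
    {w : ({x}ᶜ : Set V)} (hw : w ∈ c.supp) {b : V} (hb : b ≠ x) (hwb : G.Adj w b) :
    b ∈ Subtype.val '' c.supp :=
  ⟨⟨b, hb⟩, (ConnectedComponent.connectedComponentMk_eq_of_adj
    (G := G.induce _) (v := w) (w := ⟨b, hb⟩) hwb).symm.trans hw, rfl⟩

lemma eq_of_adj_of_mem_insert_image_supp {c : (G.induce ({x}ᶜ : Set V)).ConnectedComponent}
    {a b : V} (hab : G.Adj a b) (ha : a ∈ insert x (Subtype.val '' c.supp))
    (hb : b ∉ insert x (Subtype.val '' c.supp)) : a = x := by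
  obtain rfl | ⟨w, hw, rfl⟩ := ha
  · rfl
  · have hbx : b ≠ x := by rintro rfl; exact hb (Set.mem_insert _ _)
    exact absurd (Set.mem_insert_of_mem _ (mem_image_supp_of_adj hw hbx hab)) hb

lemma Connected.exists_adj_of_mem_supp (hc : G.Connected)
    {c : (G.induce ({x}ᶜ : Set V)).ConnectedComponent} {w : ({x}ᶜ : Set V)} (hw : w ∈ c.supp) :
    ∃ z ∈ c.supp, G.Adj z x := by
  obtain ⟨p⟩ := hc w.1 x
  obtain ⟨d, -, ⟨z, hz, hzd⟩, hd⟩ :=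
    p.exists_boundary_dart (Subtype.val '' c.supp) ⟨w, hw, rfl⟩ (notMem_image_supp c)
  have hsnd : d.snd = x := by
    by_contra h
    exact hd (mem_image_supp_of_adj hz h (hzd ▸ d.adj))
  exact ⟨z, hz, hzd ▸ hsnd ▸ d.adj⟩

lemma Connected.ncard_adj_mem_insert_image_supp_le_two [Finite V] (hc : G.Connected)
    (hx : (G.neighborSet x).ncard = 4) {c₁ c₂ c₃ : (G.induce ({x}ᶜ : Set V)).ConnectedComponent}
    (h₁₂ : c₁ ≠ c₂) (h₁₃ : c₁ ≠ c₃) (h₂₃ : c₂ ≠ c₃) (h₂ : c₂.supp.Nonempty)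
    (h₃ : c₃.supp.Nonempty) :
    {u ∈ insert x (Subtype.val '' c₁.supp) | G.Adj x u}.ncard ≤ 2 := by
  obtain ⟨z₂, hz₂, hz₂x⟩ := hc.exists_adj_of_mem_supp h₂.some_mem
  obtain ⟨z₃, hz₃, hz₃x⟩ := hc.exists_adj_of_mem_supp h₃.some_mem
  have hne : z₂.1 ≠ z₃.1 := fun h => h₂₃ (hz₂.symm.trans (Subtype.ext h ▸ hz₃))
  have hsub : {u ∈ insert x (Subtype.val '' c₁.supp) | G.Adj x u} ⊆
      G.neighborSet x \ {z₂.1, z₃.1} := by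
    rintro u ⟨rfl | ⟨w, hw, rfl⟩, hxu⟩
    · exact absurd hxu G.irrefl
    refine ⟨hxu, ?_⟩
    rintro (h | h) <;> cases Subtype.ext h
    exacts [h₁₂ (hw.symm.trans hz₂), h₁₃ (hw.symm.trans hz₃)]
  have hpair : {z₂.1, z₃.1} ⊆ G.neighborSet x := by
    simp only [Set.insert_subset_iff, Set.singleton_subset_iff]
    exact ⟨hz₂x.symm, hz₃x.symm⟩
  calc _ ≤ _ := Set.ncard_le_ncard hsub
    _ = 2 := by rw [Set.ncard_sdiff hpair, hx, Set.ncard_pair hne]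

lemma ncard_insert_image_supp {c : (G.induce ({x}ᶜ : Set V)).ConnectedComponent} [Finite V] :
    (insert x (Subtype.val '' c.supp)).ncard = Nat.card c.supp + 1 := by
  rw [Set.ncard_insert_of_notMem (notMem_image_supp c),
    Set.ncard_image_of_injective _ Subtype.val_injective,
    Nat.card_coe_set_eq]

end DeleteVertex

end SimpleGraph

theorem stmt_17_general {V : Type*} [Fintype V] (G : SimpleGraph V) (x : V) (g a₁ a₂ q : ℕ)
    (ha : a₂ ≤ a₁) (ha2 : 1 ≤ a₂)
    (hG : IsUTwoArm G x g a₁ a₂) (hg : q ^ 2 + 1 ≤ g) :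
    q + 1 ≤ burningNumber G := by
  obtain ⟨hc, -, -, -, hx, hdeg, c₁, c₂, c₃, h₁₂, h₁₃, h₂₃, -, hcard₁, hcard₂, hcard₃⟩ := hG
  have h₂ : c₂.supp.Nonempty :=
    Set.nonempty_of_ncard_ne_zero (by rw [← Nat.card_coe_set_eq]; omega)
  have h₃ : c₃.supp.Nonempty :=
    Set.nonempty_of_ncard_ne_zero (by rw [← Nat.card_coe_set_eq]; omega)
  set S := insert x (Subtype.val '' c₁.supp)
  have hdegS : ∀ w ∈ S, {u ∈ S | G.Adj w u}.ncard ≤ 2 := by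
    intro w _
    rcases eq_or_ne w x with rfl | hwx
    · exact hc.ncard_adj_mem_insert_image_supp_le_two hx h₁₂ h₁₃ h₂₃ h₂ h₃
    · exact (Set.ncard_le_ncard fun u hu => hu.2).trans (hdeg w hwx)
  obtain ⟨xs, hxs⟩ := hc.exists_isBurnSeq_burningNumber
  have hS : S.ncard ≤ burningNumber G ^ 2 := hc.ncard_le_sq_of_isBurnSeq
    (fun _ _ => eq_of_adj_of_mem_insert_image_supp) hdegS (Set.mem_insert _ _) hxs
  rw [ncard_insert_image_supp, hcard₁] at hS
  by_contra! hb
  have := Nat.pow_le_pow_left (Nat.le_of_lt_succ hb) 2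
  omega

/-- For `U_g^{a₁,a₂}` (`a₁ ≥ a₂ ≥ 1`) of order `n = q² + r` with `1 ≤ r ≤ 2q + 1`:
if `g ≥ q² + 1`, then `b(U_g^{a₁,a₂}) ≥ q + 1`. -/
theorem stmt_17 {V : Type*} [Fintype V] (G : SimpleGraph V) (x : V) (g a₁ a₂ n q r : ℕ)
    (ha : a₂ ≤ a₁) (ha2 : 1 ≤ a₂)
    (hn : n = g + a₁ + a₂) (hnqr : n = q ^ 2 + r) (hr1 : 1 ≤ r) (hr2 : r ≤ 2 * q + 1)
    (hG : IsUTwoArm G x g a₁ a₂) (hg : q ^ 2 + 1 ≤ g) :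
    q + 1 ≤ burningNumber G :=
  stmt_17_general G x g a₁ a₂ q ha ha2 hG hg
end
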